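/- Let η̃ = dq·q̄ + dp·p̄ - q·dq̄ - p·dp̄ be the standard quaternion-valued contact form on the unit sphere S ⊂ ℍⁿ×ℍ and Θ̃ the standard contact form on the Heisenberg group boundary Σ, given by 4Θ̃ = (dp̄' - dp') + 2dq'·q̄' - 2q'·dq̄'. Then under the Cayley transform C the pullback satisfies 2 C*Θ̃ = (1/|1+p|²) λ · η̃ · λ̄, where λ = |1+p|(1+p)⁻¹ is a unit quaternion. In particular, the Cayley transform is a conformal quaternionic contact transformation: C*Θ̃ and η̃ differ by a positive conformal factor 1/(2|1+p|²) and conjugation by the unit quaternion λ (an SO(3) rotation of the three components). -/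

import Mathlib

/-!
Both contact forms are imaginary parts of simpler forms: `η̃ = ω - ω̄` with `ω = dq·q̄ + dp·p̄`,
and `2Θ̃ = ω' - ω̄'` with `ω' = dq'·q̄' - ½ dp'`. Writing `a = (1+p)⁻¹`, the Cayley transform has
`dq' = a dq - a dp a q` and `dp' = -2 a dp a`, and on the sphere `|q|² = 1 - |p|²` turns
`a - |q|² a ā` into `p̄ ā`; together these give `C*ω' = a ω ā`. Conjugation by `a` commutes with
`ω ↦ ω - ω̄`, and `a = λ / |1+p|`.
-/

open scoped Quaternion

/-- The standard quaternion-valued contact form on the unit sphere `S ⊂ ℍⁿ × ℍ`,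
evaluated at `x` on a tangent vector `v`:
`η̃ = dq·q̄ + dp·p̄ - q·dq̄ - p·dp̄`. -/
noncomputable def sphereEta {n : ℕ} (x v : (Fin n → ℍ[ℝ]) × ℍ[ℝ]) : ℍ[ℝ] :=
  (∑ α, v.1 α * star (x.1 α)) + v.2 * star x.2 -
    (∑ α, x.1 α * star (v.1 α)) - x.2 * star v.2

/-- The standard contact form on the boundary `Σ` of the Siegel domain:
`4Θ̃ = (dp̄' - dp') + 2dq'·q̄' - 2q'·dq̄'`. -/
noncomputable def heisTheta {n : ℕ} (x w : (Fin n → ℍ[ℝ]) × ℍ[ℝ]) : ℍ[ℝ] :=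
  (4:ℝ)⁻¹ • ((star w.2 - w.2) + 2 * (∑ α, w.1 α * star (x.1 α)) -
    2 * (∑ α, x.1 α * star (w.1 α)))

/-- The Cayley transform `(q,p) ↦ ((1+p)⁻¹q, (1+p)⁻¹(1-p))`. -/
noncomputable def cayleyMap {n : ℕ} (x : (Fin n → ℍ[ℝ]) × ℍ[ℝ]) :
    (Fin n → ℍ[ℝ]) × ℍ[ℝ] :=
  (fun α => (1 + x.2)⁻¹ * x.1 α, (1 + x.2)⁻¹ * (1 - x.2))

namespace Quaternion

theorem mul_sub_star_mul_star (a z : ℍ[ℝ]) :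
    a * (z - star z) * star a = a * z * star a - star (a * z * star a) := by
  simp only [star_mul, star_star, mul_sub, sub_mul, mul_assoc]

theorem norm_smul_inv_self {u : ℍ[ℝ]} (hu : u ≠ 0) : ‖‖u‖ • u⁻¹‖ = 1 := by
  rw [norm_smul, norm_inv, norm_norm, mul_inv_cancel₀ (norm_ne_zero_iff.2 hu)]

theorem normSq_inv_smul_conj {u : ℍ[ℝ]} (hu : u ≠ 0) (z : ℍ[ℝ]) :
    (normSq u)⁻¹ • (‖u‖ • u⁻¹ * z * star (‖u‖ • u⁻¹)) = u⁻¹ * z * star u⁻¹ := by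
  rw [star_smul, smul_mul_assoc, smul_mul_assoc, mul_smul_comm, smul_smul, smul_smul,
    mul_assoc, ← normSq_eq_norm_mul_self, inv_mul_cancel₀ (normSq_ne_zero.2 hu), one_smul]

theorem inv_one_add_mul_one_sub_add_one {p : ℍ[ℝ]} (hp : 1 + p ≠ 0) :
    (1 + p)⁻¹ * (1 - p) + 1 = (2:ℝ) • (1 + p)⁻¹ := by
  calc (1 + p)⁻¹ * (1 - p) + 1 = (1 + p)⁻¹ * (1 - p) + (1 + p)⁻¹ * (1 + p) := by
        rw [inv_mul_cancel₀ hp]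
    _ = (1 + p)⁻¹ + (1 + p)⁻¹ := by rw [← mul_add, sub_add_add_cancel, mul_add, mul_one]
    _ = (2:ℝ) • (1 + p)⁻¹ := (two_smul ℝ _).symm

theorem inv_one_add_sub_smul_mul_star {p : ℍ[ℝ]} (hp : 1 + p ≠ 0) :
    (1 + p)⁻¹ - (1 - normSq p) • ((1 + p)⁻¹ * star (1 + p)⁻¹) = star p * star (1 + p)⁻¹ := by
  have hu : (1 + p) * (1 + p)⁻¹ = 1 := mul_inv_cancel₀ hp
  have hu' : star (1 + p)⁻¹ * star (1 + p) = 1 := by rw [← star_mul, hu, star_one]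
  refine mul_left_cancel₀ hp (mul_right_cancel₀ (star_ne_zero.2 hp) ?_)
  calc (1 + p) * ((1 + p)⁻¹ - (1 - normSq p) • ((1 + p)⁻¹ * star (1 + p)⁻¹)) * star (1 + p)
      = (1 + p) * (1 + p)⁻¹ * star (1 + p) - (1 - normSq p) •
          ((1 + p) * (1 + p)⁻¹ * (star (1 + p)⁻¹ * star (1 + p))) := by
        simp only [mul_sub, sub_mul, mul_smul_comm, smul_mul_assoc, mul_assoc]
    _ = (1 + p) * star p := by
        rw [hu, hu', one_mul, mul_one, star_add, star_one, add_mul, self_mul_star, one_mul,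
          sub_smul, one_smul, ← coe_mul_eq_smul, mul_one]
        abel
    _ = (1 + p) * (star p * star (1 + p)⁻¹) * star (1 + p) := by
        rw [mul_assoc, mul_assoc, hu', mul_one]

end Quaternion

open Quaternion

section

variable {n : ℕ}

noncomputable def sphereOmega (x v : (Fin n → ℍ[ℝ]) × ℍ[ℝ]) : ℍ[ℝ] :=
  (∑ α, v.1 α * star (x.1 α)) + v.2 * star x.2

noncomputable def heisOmega (x w : (Fin n → ℍ[ℝ]) × ℍ[ℝ]) : ℍ[ℝ] :=
  (∑ α, w.1 α * star (x.1 α)) - (2:ℝ)⁻¹ • w.2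

theorem sphereEta_eq_sub_star (x v : (Fin n → ℍ[ℝ]) × ℍ[ℝ]) :
    sphereEta x v = sphereOmega x v - star (sphereOmega x v) := by
  simp only [sphereEta, sphereOmega, star_add, star_sum, star_mul, star_star]
  abel

theorem two_smul_heisTheta (x w : (Fin n → ℍ[ℝ]) × ℍ[ℝ]) :
    (2:ℝ) • heisTheta x w = heisOmega x w - star (heisOmega x w) := by
  simp only [heisTheta, heisOmega, star_sub, star_sum, star_mul, star_star, Quaternion.star_smul, two_mul]
  module

open ContinuousLinearMap in
theorem fderiv_cayleyMap_apply {x : (Fin n → ℍ[ℝ]) × ℍ[ℝ]} (hp : 1 + x.2 ≠ 0)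
    (v : (Fin n → ℍ[ℝ]) × ℍ[ℝ]) :
    fderiv ℝ cayleyMap x v =
      (fun α => (1 + x.2)⁻¹ * v.1 α - (1 + x.2)⁻¹ * v.2 * (1 + x.2)⁻¹ * x.1 α,
        -(2:ℝ) • ((1 + x.2)⁻¹ * v.2 * (1 + x.2)⁻¹)) := by
  have hsnd := hasFDerivAt_snd (𝕜 := ℝ) (p := x)
  have hinv := (hasFDerivAt_inv' hp).comp x (hsnd.const_add 1)
  have hD : HasFDerivAt cayleyMap _ x :=
    (hasFDerivAt_pi.2 fun α => hinv.mul' ((proj α).comp (fst ℝ _ _)).hasFDerivAt).prodMk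
      (hinv.mul' (hsnd.const_sub 1))
  rw [hD.fderiv]
  ext1
  · funext α
    simp [sub_eq_add_neg]
  · simp [← mul_smul_comm, ← inv_one_add_mul_one_sub_add_one hp, mul_add, mul_assoc]

theorem heisOmega_cayleyMap {x : (Fin n → ℍ[ℝ]) × ℍ[ℝ]}
    (hS : (∑ α, normSq (x.1 α)) + normSq x.2 = 1) (hp : 1 + x.2 ≠ 0)
    (v : (Fin n → ℍ[ℝ]) × ℍ[ℝ]) :
    heisOmega (cayleyMap x) (fderiv ℝ cayleyMap x v) =
      (1 + x.2)⁻¹ * sphereOmega x v * star (1 + x.2)⁻¹ := by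
  have hkey := inv_one_add_sub_smul_mul_star hp
  rw [fderiv_cayleyMap_apply hp]
  simp only [heisOmega, cayleyMap, sphereOmega]
  set a := (1 + x.2)⁻¹
  have hterm : ∀ α, (a * v.1 α - a * v.2 * a * x.1 α) * star (a * x.1 α) =
      a * (v.1 α * star (x.1 α)) * star a - normSq (x.1 α) • (a * v.2 * (a * star a)) := by
    intro α
    calc _ = a * (v.1 α * star (x.1 α)) * star a
          - a * v.2 * a * (x.1 α * star (x.1 α)) * star a := by
          rw [star_mul]; noncomm_ring
      _ = _ := by rw [self_mul_star, mul_coe_eq_smul, smul_mul_assoc, mul_assoc (a * v.2)]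
  rw [Finset.sum_congr rfl fun α _ => hterm α, Finset.sum_sub_distrib, ← Finset.sum_smul,
    ← Finset.sum_mul, ← Finset.mul_sum, eq_sub_of_add_eq hS, mul_add, add_mul]
  simp only [mul_assoc]
  rw [← hkey]
  simp only [mul_sub, mul_smul_comm]
  module

end

/-- The Cayley transform is a conformal quaternionic contact transformation: on the unit
sphere, `2 C*Θ̃ = (1/|1+p|²) λ·η̃·λ̄` with `λ = |1+p|(1+p)⁻¹` a unit quaternion, i.e.
the pullback of the standard structure of the quaternionic Heisenberg group differs from
the standard structure of the sphere by the positive conformal factor `1/(2|1+p|²)` and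
the `SO(3)` rotation given by conjugation by `λ`. -/
theorem cayley_conformal_contact {n : ℕ} (x : (Fin n → ℍ[ℝ]) × ℍ[ℝ])
    (hS : (∑ α, Quaternion.normSq (x.1 α)) + Quaternion.normSq x.2 = 1)
    (hp : x.2 ≠ -1) :
    ‖(‖1 + x.2‖ • (1 + x.2)⁻¹ : ℍ[ℝ])‖ = 1 ∧
    ∀ v : (Fin n → ℍ[ℝ]) × ℍ[ℝ],
      ((∑ α, v.1 α * star (x.1 α)) + v.2 * star x.2).re = 0 →
      (2:ℝ) • heisTheta (cayleyMap x) (fderiv ℝ cayleyMap x v) =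
        (Quaternion.normSq (1 + x.2))⁻¹ •
          ((‖1 + x.2‖ • (1 + x.2)⁻¹ : ℍ[ℝ]) * sphereEta x v *
            star (‖1 + x.2‖ • (1 + x.2)⁻¹ : ℍ[ℝ])) := by
  have hu : (1 : ℍ[ℝ]) + x.2 ≠ 0 := fun h => hp (eq_neg_of_add_eq_zero_right h)
  refine ⟨norm_smul_inv_self hu, fun v _ => ?_⟩
  rw [two_smul_heisTheta, heisOmega_cayleyMap hS hu, normSq_inv_smul_conj hu,
    sphereEta_eq_sub_star, mul_sub_star_mul_star]
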